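/- arXiv:2603.11532 — 2 statements merged into one kernel-verified Lean document; each statement's English description precedes it below -/
import Mathlib

section
/- Let $T = \{l, l+1, \ldots, u\} \subset \mathbb{Z}$ with $l < u$, let $x : T \to [0,1]$, and let $y : T \to \{0,1\}$ satisfy: (C3) $x_i \le x_{i+1} + (1 - y_i)$ for all $i \in T \setminus \{u\}$; (C4) $x_i \ge x_{i+1} - y_i$ for all $i \in T \setminus \{u\}$; and (C5) $y_i \ge y_{i+1}$ for all $i \in T \setminus \{u\}$. Then $x$ is unimodal: there exists $t \in T$ such that $x_i \le x_{i+1}$ for all $i \in T$ with $i + 1 \le t$, and $x_i \ge x_{i+1}$ for all $i \in T \setminus \{u\}$ with $t \le i$. -/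
/-!
Since `y` is binary and nonincreasing, it equals `1` before some index `t` and `0` from `t` on.
Where `yᵢ = 1`, (C3) reads `xᵢ ≤ xᵢ₊₁`; where `yᵢ = 0`, (C4) reads `xᵢ₊₁ ≤ xᵢ`. So `t` is a peak.
-/

theorem Int.exists_threshold_of_succ_closed (p : ℤ → Prop) (l m : ℤ) (hlm : l ≤ m + 1)
    (hsucc : ∀ i, l ≤ i → i < m → p i → p (i + 1)) :
    ∃ t, l ≤ t ∧ t ≤ m + 1 ∧ ∀ i, l ≤ i → i ≤ m → (p i ↔ t ≤ i) := by
  induction m, (show l - 1 ≤ m by omega) using Int.leInduction with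
  | base => exact ⟨l, le_rfl, by omega, fun i hl hi => by omega⟩
  | succ m hm ih =>
    obtain ⟨t, hlt, htm, hpt⟩ := ih (by omega) fun i hl hi => hsucc i hl (by omega)
    by_cases hp : p (m + 1)
    · refine ⟨t, hlt, by omega, fun i hl hi => ?_⟩
      rcases (show i ≤ m ∨ i = m + 1 by omega) with hi | rfl
      · exact hpt i hl hi
      · exact iff_of_true hp (by omega)
    · -- Otherwise `p m` fails too, since it would propagate to `m + 1`.
      have ht : t = m + 1 := by
        by_contra
        exact hp (hsucc m (by omega) (by omega) ((hpt m (by omega) le_rfl).2 (by omega)))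
      refine ⟨m + 2, by omega, by omega, fun i hl hi => ?_⟩
      rcases (show i ≤ m ∨ i = m + 1 by omega) with hi | rfl
      · rw [hpt i hl hi]
        omega
      · exact iff_of_false hp (by omega)

theorem mip_constraints_imp_unimodal_general
    (l u : ℤ) (hlu : l < u) (x y : ℤ → ℝ)
    (hy : ∀ i ∈ Finset.Icc l u, y i = 0 ∨ y i = 1)
    (hC3 : ∀ i ∈ Finset.Icc l (u - 1), x i ≤ x (i + 1) + (1 - y i))
    (hC4 : ∀ i ∈ Finset.Icc l (u - 1), x (i + 1) - y i ≤ x i)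
    (hC5 : ∀ i ∈ Finset.Icc l (u - 1), y (i + 1) ≤ y i) :
    ∃ t ∈ Finset.Icc l u,
      (∀ i : ℤ, l ≤ i → i + 1 ≤ t → x i ≤ x (i + 1)) ∧
      (∀ i : ℤ, t ≤ i → i < u → x (i + 1) ≤ x i) := by
  have hzero_succ : ∀ i, l ≤ i → i < u - 1 → y i = 0 → y (i + 1) = 0 := fun i hl hi h0 =>
    (hy (i + 1) (Finset.mem_Icc.mpr ⟨by omega, by omega⟩)).resolve_right fun h1 => by
      linarith [hC5 i (Finset.mem_Icc.mpr ⟨by omega, by omega⟩)]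
  obtain ⟨t, hlt, htu, hyt⟩ :=
    Int.exists_threshold_of_succ_closed (fun i => y i = 0) l (u - 1) (by omega) hzero_succ
  refine ⟨t, Finset.mem_Icc.mpr ⟨hlt, by omega⟩, fun i hl hi => ?_, fun i hti hiu => ?_⟩
  · have hy1 : y i = 1 :=
      (hy i (Finset.mem_Icc.mpr ⟨by omega, by omega⟩)).resolve_left fun h0 => by
        linarith [(hyt i hl (by omega)).1 h0]
    linarith [hC3 i (Finset.mem_Icc.mpr ⟨by omega, by omega⟩)]
  · have hy0 : y i = 0 := (hyt i (by omega) (by omega)).2 hti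
    linarith [hC4 i (Finset.mem_Icc.mpr ⟨by omega, by omega⟩)]

/-- **soundness of the MIP unimodality constraints.**
Let `T = {l, …, u} ⊂ ℤ` with `l < u`, let `x : T → [0,1]`, and let `y : T → {0,1}`
satisfy the constraints (C3) `xᵢ ≤ xᵢ₊₁ + (1 - yᵢ)`, (C4) `xᵢ ≥ xᵢ₊₁ - yᵢ` and
(C5) `yᵢ ≥ yᵢ₊₁` for all `i ∈ T \ {u}`. Then `x` is unimodal: there is `t ∈ T` such
that `xᵢ ≤ xᵢ₊₁` whenever `i + 1 ≤ t`, and `xᵢ ≥ xᵢ₊₁` whenever `t ≤ i < u`. -/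
theorem mip_constraints_imp_unimodal
    (l u : ℤ) (hlu : l < u) (x y : ℤ → ℝ)
    (hx : ∀ i ∈ Finset.Icc l u, x i ∈ Set.Icc (0 : ℝ) 1)
    (hy : ∀ i ∈ Finset.Icc l u, y i = 0 ∨ y i = 1)
    (hC3 : ∀ i ∈ Finset.Icc l (u - 1), x i ≤ x (i + 1) + (1 - y i))
    (hC4 : ∀ i ∈ Finset.Icc l (u - 1), x (i + 1) - y i ≤ x i)
    (hC5 : ∀ i ∈ Finset.Icc l (u - 1), y (i + 1) ≤ y i) :
    ∃ t ∈ Finset.Icc l u,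
      (∀ i : ℤ, l ≤ i → i + 1 ≤ t → x i ≤ x (i + 1)) ∧
      (∀ i : ℤ, t ≤ i → i < u → x (i + 1) ≤ x i) :=
  mip_constraints_imp_unimodal_general l u hlu x y hy hC3 hC4 hC5
end

section
/- Let $T = \{l, l+1, \ldots, u\} \subset \mathbb{Z}$ with $l < u$ and let $x : T \to [0,1]$ be unimodal, i.e., there exists $t \in T$ such that $x_i \le x_{i+1}$ for all $i$ with $i+1 \le t$ and $x_i \ge x_{i+1}$ for all $i \ge t$ with $i < u$. Then there exists $y : T \to \{0,1\}$ satisfying: (C3) $x_i \le x_{i+1} + (1 - y_i)$ for all $i \in T \setminus \{u\}$; (C4) $x_i \ge x_{i+1} - y_i$ for all $i \in T \setminus \{u\}$; and (C5) $y_i \ge y_{i+1}$ for all $i \in T \setminus \{u\}$. -/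
/-- **completeness of the MIP unimodality constraints.**
Let `T = {l, …, u} ⊂ ℤ` with `l < u` and let `x : T → [0,1]` be unimodal, i.e. there
is `t ∈ T` with `xᵢ ≤ xᵢ₊₁` whenever `i + 1 ≤ t` and `xᵢ ≥ xᵢ₊₁` whenever `t ≤ i < u`.
Then there exists `y : T → {0,1}` satisfying (C3) `xᵢ ≤ xᵢ₊₁ + (1 - yᵢ)`,
(C4) `xᵢ ≥ xᵢ₊₁ - yᵢ` and (C5) `yᵢ ≥ yᵢ₊₁` for all `i ∈ T \ {u}`. -/
theorem unimodal_imp_mip_constraints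
    (l u : ℤ) (hlu : l < u) (x : ℤ → ℝ)
    (hx : ∀ i ∈ Finset.Icc l u, x i ∈ Set.Icc (0 : ℝ) 1)
    (hunimodal : ∃ t ∈ Finset.Icc l u,
      (∀ i : ℤ, l ≤ i → i + 1 ≤ t → x i ≤ x (i + 1)) ∧
      (∀ i : ℤ, t ≤ i → i < u → x (i + 1) ≤ x i)) :
    ∃ y : ℤ → ℝ,
      (∀ i ∈ Finset.Icc l u, y i = 0 ∨ y i = 1) ∧
      (∀ i ∈ Finset.Icc l (u - 1), x i ≤ x (i + 1) + (1 - y i)) ∧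
      (∀ i ∈ Finset.Icc l (u - 1), x (i + 1) - y i ≤ x i) ∧
      (∀ i ∈ Finset.Icc l (u - 1), y (i + 1) ≤ y i) := by
  obtain ⟨t, ht, hinc, hdec⟩ := hunimodal
  simp only [Finset.mem_Icc] at ht
  refine ⟨fun i => if i < t then 1 else 0, ?_, ?_, ?_, ?_⟩
  · intro i _; by_cases h : i < t <;> simp [h]
  · intro i hi
    simp only [Finset.mem_Icc] at hi
    by_cases h : i < t
    · simp only [h, if_pos]
      have := hinc i hi.1 (by omega)
      linarith
    · simp only [h, if_neg, not_false_iff]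
      have h1 := hx i (by simp only [Finset.mem_Icc]; omega)
      have h2 := hx (i+1) (by simp only [Finset.mem_Icc]; omega)
      simp only [Set.mem_Icc] at h1 h2
      linarith
  · intro i hi
    simp only [Finset.mem_Icc] at hi
    by_cases h : i < t
    · simp only [h, if_pos]
      have h1 := hx i (by simp only [Finset.mem_Icc]; omega)
      have h2 := hx (i+1) (by simp only [Finset.mem_Icc]; omega)
      simp only [Set.mem_Icc] at h1 h2
      linarith
    · simp only [h, if_neg, not_false_iff]
      have := hdec i (by omega) (by omega)
      linarith
  · intro i hi
    simp only [Finset.mem_Icc] at hi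
    by_cases h : i + 1 < t
    · simp [h, show i < t by omega]
    · simp only [h, if_neg, not_false_iff]
      by_cases h2 : i < t <;> simp [h2]
end
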